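/- arXiv:1805.02198 — 2 statements merged into one kernel-verified Lean document; each statement's English description precedes it below -/
import Mathlib

section
/- A tree T with at least one edge has a complete edge-set graph if and only if diam(T) ≤ 2. -/
open SimpleGraph

/-- Two edges (as elements of `Sym2 V`) are adjacent in `G` if they are distinct
and share an endpoint. The *edge-set graph* of `G` has as vertices the nonempty
subsets of the edge set of `G`, two distinct subsets being adjacent iff some edge
of one is adjacent to some edge of the other. -/
def edgeSetGraph {V : Type*} (G : SimpleGraph V) :
    SimpleGraph {A : Finset (Sym2 V) // ↑A ⊆ G.edgeSet ∧ A.Nonempty} where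
  Adj A B := A ≠ B ∧ ∃ a ∈ A.1, ∃ b ∈ B.1, a ≠ b ∧ ∃ v, v ∈ a ∧ v ∈ b
  symm := ⟨by
    rintro A B ⟨hne, a, ha, b, hb, hab, v, hv1, hv2⟩
    exact ⟨hne.symm, b, hb, a, ha, hab.symm, v, hv2, hv1⟩⟩
  loopless := ⟨fun A h => h.1 rfl⟩

/-!
Testing completeness of the edge-set graph on singletons shows that it says exactly that any two
edges meet. In a connected graph this bounds every distance by `2`, through a common vertex of an
edge at `u` and an edge at `v`. Conversely, in a tree two disjoint edges extend to a path with
three edges, and paths in a tree are geodesics, so the diameter would be at least `3`.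
-/

lemma Finset.exists_mem_mem_ne_of_ne {α : Type*} {A B : Finset α} (hA : A.Nonempty)
    (hB : B.Nonempty) (hAB : A ≠ B) : ∃ a ∈ A, ∃ b ∈ B, a ≠ b := by
  by_contra! h
  obtain ⟨a, ha⟩ := hA
  obtain ⟨b, hb⟩ := hB
  have hA' : A = {b} :=
    Finset.eq_singleton_iff_unique_mem.2 ⟨h a ha b hb ▸ ha, fun x hx => h x hx b hb⟩
  have hB' : B = {a} :=
    Finset.eq_singleton_iff_unique_mem.2 ⟨(h a ha b hb).symm ▸ hb, fun y hy => (h a ha y hy).symm⟩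
  exact hAB (by rw [hA', hB', h a ha b hb])

lemma edgeSetGraph_eq_top_iff {V : Type*} (G : SimpleGraph V) :
    edgeSetGraph G = ⊤ ↔ G.edgeSet.Pairwise fun e f => ∃ v, v ∈ e ∧ v ∈ f := by
  constructor
  · intro h e he f hf hef
    let single (x : Sym2 V) (hx : x ∈ G.edgeSet) :
        {A : Finset (Sym2 V) // ↑A ⊆ G.edgeSet ∧ A.Nonempty} :=
      ⟨{x}, by simpa using hx, Finset.singleton_nonempty x⟩
    have hadj : (edgeSetGraph G).Adj (single e he) (single f hf) := by
      rw [h, top_adj]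
      simpa [single, Subtype.ext_iff] using hef
    obtain ⟨-, a, ha, b, hb, -, hv⟩ := hadj
    simp only [single, Finset.mem_singleton] at ha hb
    exact ha ▸ hb ▸ hv
  · intro h
    ext A B
    refine ⟨fun hAB => hAB.1, fun hAB => ⟨hAB, ?_⟩⟩
    obtain ⟨a, ha, b, hb, hab⟩ :=
      Finset.exists_mem_mem_ne_of_ne A.2.2 B.2.2 (fun h' => hAB (Subtype.ext h'))
    exact ⟨a, ha, b, hb, hab, h (A.2.1 ha) (B.2.1 hb) hab⟩

namespace SimpleGraph

variable {V : Type*} {G : SimpleGraph V}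

lemma Connected.diam_le_iff [Finite V] (hG : G.Connected) {k : ℕ} :
    G.diam ≤ k ↔ ∀ u v, G.dist u v ≤ k := by
  have : Nonempty V := hG.nonempty
  refine ⟨fun h u v => (dist_le_diam (connected_iff_ediam_ne_top.1 hG)).trans h, fun h => ?_⟩
  have : G.ediam ≤ k := ediam_le_of_edist_le fun u v => by
    rw [← (hG u v).coe_dist_eq_edist]
    exact_mod_cast h u v
  exact ENat.toNat_le_of_le_natCast this

lemma dist_le_one_of_mem_edgeSet {e : Sym2 V} (he : e ∈ G.edgeSet) {u w : V} (hu : u ∈ e)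
    (hw : w ∈ e) : G.dist u w ≤ 1 := by
  by_cases huw : u = w
  · simp [huw]
  · rw [(Sym2.mem_and_mem_iff huw).1 ⟨hu, hw⟩, mem_edgeSet] at he
    exact (dist_eq_one_iff_adj.2 he).le

lemma Connected.dist_le_two_of_pairwise_meet (hG : G.Connected)
    (h : G.edgeSet.Pairwise fun e f => ∃ v, v ∈ e ∧ v ∈ f) (u v : V) : G.dist u v ≤ 2 := by
  by_cases huv : u = v
  · simp [huv]
  obtain ⟨p, -⟩ := hG.exists_path_of_dist u v
  have hp : ¬p.Nil := Walk.not_nil_of_ne huv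
  have hu : s(u, p.snd) ∈ G.edgeSet := p.adj_snd hp
  have hv : s(p.penultimate, v) ∈ G.edgeSet := p.adj_penultimate hp
  obtain ⟨w, huw, hvw⟩ : ∃ w, w ∈ s(u, p.snd) ∧ w ∈ s(p.penultimate, v) := by
    by_cases hef : s(u, p.snd) = s(p.penultimate, v)
    · exact ⟨u, Sym2.mem_mk_left _ _, hef ▸ Sym2.mem_mk_left _ _⟩
    · exact h hu hv hef
  calc G.dist u v ≤ G.dist u w + G.dist w v := hG.dist_triangle
    _ ≤ 1 + 1 := add_le_add (dist_le_one_of_mem_edgeSet hu (Sym2.mem_mk_left _ _) huw)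
        (dist_le_one_of_mem_edgeSet hv hvw (Sym2.mem_mk_right _ _))

lemma IsAcyclic.dist_eq_length (hG : G.IsAcyclic) {u v : V} {p : G.Walk u v} (hp : p.IsPath) :
    G.dist u v = p.length := by
  obtain ⟨q, hq, hql⟩ := p.reachable.exists_path_of_dist
  rw [← hql, Subtype.mk.inj ((hG.subsingleton_path u v).elim ⟨q, hq⟩ ⟨p, hp⟩)]

lemma IsAcyclic.dist_eq_three (hG : G.IsAcyclic) {a b c d : V} (hab : G.Adj a b)
    (hbc : G.Adj b c) (hcd : G.Adj c d) (hac : a ≠ c) (hbd : b ≠ d) (had : a ≠ d) :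
    G.dist a d = 3 := by
  have hp : (Walk.cons hab (Walk.cons hbc (Walk.cons hcd Walk.nil))).IsPath := by
    simp [hab.ne, hbc.ne, hcd.ne, hac, hbd, had]
  simpa using hG.dist_eq_length hp

lemma IsTree.pairwise_meet_of_dist_le_two (hG : G.IsTree) (h : ∀ u v, G.dist u v ≤ 2) :
    G.edgeSet.Pairwise fun e f => ∃ v, v ∈ e ∧ v ∈ f := by
  intro e he f hf _
  induction e using Sym2.ind with | _ a b =>
  induction f using Sym2.ind with | _ c d =>
  rw [mem_edgeSet] at he hf
  by_contra! hdisj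
  simp only [Sym2.mem_iff] at hdisj
  have hac : a ≠ c := fun h => hdisj a (.inl rfl) (.inl h)
  have had : a ≠ d := fun h => hdisj a (.inl rfl) (.inr h)
  have hbc : b ≠ c := fun h => hdisj b (.inr rfl) (.inl h)
  have hbd : b ≠ d := fun h => hdisj b (.inr rfl) (.inr h)
  have := hG.connected.pos_dist_of_ne hac
  have := h a c
  interval_cases hdist : G.dist a c
  · have := hG.isAcyclic.dist_eq_three he.symm (dist_eq_one_iff_adj.1 hdist) hf hbc had hbd
    linarith [h b d]
  · obtain ⟨w, haw, hwc⟩ : ∃ w, G.Adj a w ∧ G.Adj w c := by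
      have : G.edist a c = 2 := by
        rw [← (hG.connected a c).coe_dist_eq_edist, hdist]; rfl
      obtain ⟨-, -, w, hw⟩ := edist_eq_two_iff.1 this
      obtain ⟨haw, hcw⟩ := (G.mem_commonNeighbors).1 hw
      exact ⟨w, haw, hcw.symm⟩
    by_cases hwb : w = b
    · subst hwb
      have := hG.isAcyclic.dist_eq_three he hwc hf hac hbd had
      linarith [h a d]
    · have := hG.isAcyclic.dist_eq_three he.symm haw hwc (Ne.symm hwb) hac hbc
      linarith [h b c]

lemma IsTree.pairwise_meet_iff_diam_le_two [Finite V] (hG : G.IsTree) :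
    (G.edgeSet.Pairwise fun e f => ∃ v, v ∈ e ∧ v ∈ f) ↔ G.diam ≤ 2 := by
  rw [hG.connected.diam_le_iff]
  exact ⟨hG.connected.dist_le_two_of_pairwise_meet, hG.pairwise_meet_of_dist_le_two⟩

end SimpleGraph

theorem stmt6_general {V : Type*} [Fintype V] (T : SimpleGraph V)
    (hconn : T.Connected) (hacyc : T.IsAcyclic) :
    edgeSetGraph T = ⊤ ↔ T.diam ≤ 2 :=
  (edgeSetGraph_eq_top_iff T).trans (IsTree.pairwise_meet_iff_diam_le_two ⟨hconn, hacyc⟩)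

/-- A tree `T` with at least one edge has a complete edge-set graph if and only
if `diam T ≤ 2`. -/
theorem stmt6 {V : Type*} [Fintype V] (T : SimpleGraph V)
    (hconn : T.Connected) (hacyc : T.IsAcyclic) (he : T.edgeSet.Nonempty) :
    edgeSetGraph T = ⊤ ↔ T.diam ≤ 2 :=
  stmt6_general T hconn hacyc
end

section
/- The chromatic number of the edge-set graph of the path P₄ (path on 4 vertices, 3 edges) equals 5. -/
/-!
The edge `e_{i+1}` is the index `i : Fin 3`, so `1 ∈ A` says that `A` contains `e₂`.

Lower bound: the four edge sets containing the middle edge `e₂`, together with `{e₁, e₃}`,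
are pairwise adjacent, since each of them meets `e₂` and the other one meets `e₁` or `e₃`.
Upper bound: the three nonempty subsets of `{e₁, e₃}` are pairwise non-adjacent (as `e₁ ≁ e₃`),
so they can share one colour, and the four remaining sets get four further colours.
-/

open SimpleGraph

/-- The edge-set graph of the path `P_{n+1}`, whose edges are `e_1, …, e_n`
(indexed here by `Fin n`), with `e_i ~ e_j` iff `|i - j| = 1`.  Its vertices are
the nonempty subsets of the edge set, two distinct subsets `A, B` being adjacent
iff some `a ∈ A` and `b ∈ B` are adjacent edges of the path. -/
def pathSetGraph (n : ℕ) : SimpleGraph {A : Finset (Fin n) // A.Nonempty} where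
  Adj A B := A ≠ B ∧ ∃ a ∈ A.1, ∃ b ∈ B.1, ((a : ℕ) + 1 = b ∨ (b : ℕ) + 1 = a)
  symm := ⟨by
    rintro A B ⟨hne, a, ha, b, hb, hab⟩
    exact ⟨hne.symm, b, hb, a, ha, hab.symm⟩⟩
  loopless := ⟨fun A h => h.1 rfl⟩

instance (n : ℕ) : DecidableRel (pathSetGraph n).Adj := fun A B =>
  inferInstanceAs (Decidable (A ≠ B ∧ _))

namespace pathSetGraph

def coloringThree : (pathSetGraph 3).Coloring (Fin 5) :=
  Coloring.mk
    (fun A => if 1 ∈ A.1 then 1 + (if 0 ∈ A.1 then 1 else 0) + (if 2 ∈ A.1 then 2 else 0) else 0)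
    (by decide)

def cliqueThree : Finset {A : Finset (Fin 3) // A.Nonempty} :=
  {A | 1 ∈ A.1 ∨ A.1 = {0, 2}}

theorem isNClique_cliqueThree : (pathSetGraph 3).IsNClique 5 cliqueThree := by
  decide

end pathSetGraph

/-- The chromatic number of the edge-set graph of the path `P₄` (3 edges) is 5. -/
theorem stmt9 : (pathSetGraph 3).chromaticNumber = 5 := by
  refine le_antisymm pathSetGraph.coloringThree.colorable.chromaticNumber_le ?_
  have := pathSetGraph.isNClique_cliqueThree.isClique.card_le_chromaticNumber
  rwa [pathSetGraph.isNClique_cliqueThree.card_eq] at this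
end
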